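/- arXiv:2103.06177 — 6 statements merged into one kernel-verified Lean document; each statement's English description precedes it below -/
import Mathlib

section
/- Let 0 ≤ δ_A ≤ δ_B < 1 and Δ = (1-δ_B)/(1-δ_A). Then (1-δ_A)·Δ²/6 + (1-δ_B)·(3-2Δ)/6 ≥ (1-δ_A)·Δ³/6 + (1-δ_B)·Δ·(3-2Δ²)/6. -/
/-! Writing `1 - δB = Δ (1 - δA)`, the revenue gap is `(1 - δA) Δ (Δ - 1)² (2Δ + 3) / 6`,
which is nonnegative because `Δ ≥ 0`. -/

lemma revenue_gap_eq (a Δ : ℝ) :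
    a * Δ ^ 2 / 6 + Δ * a * (3 - 2 * Δ) / 6 -
        (a * Δ ^ 3 / 6 + Δ * a * Δ * (3 - 2 * Δ ^ 2) / 6) =
      a * Δ * (Δ - 1) ^ 2 * (2 * Δ + 3) / 6 := by
  ring

theorem stmt_7_general (δA δB : ℝ) (h1 : δA ≤ δB) (h2 : δB < 1)
    (Δ : ℝ) (hΔ : Δ = (1 - δB) / (1 - δA)) :
    (1 - δA) * Δ ^ 2 / 6 + (1 - δB) * (3 - 2 * Δ) / 6 ≥
      (1 - δA) * Δ ^ 3 / 6 + (1 - δB) * Δ * (3 - 2 * Δ ^ 2) / 6 := by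
  have ha : 0 < 1 - δA := by linarith
  have hΔ0 : 0 ≤ Δ := hΔ ▸ div_nonneg (by linarith) ha.le
  have hb : 1 - δB = Δ * (1 - δA) := by rw [hΔ, div_mul_cancel₀ _ ha.ne']
  rw [hb, ge_iff_le, ← sub_nonneg, revenue_gap_eq]
  positivity

theorem stmt_7 (δA δB : ℝ) (h0 : 0 ≤ δA) (h1 : δA ≤ δB) (h2 : δB < 1)
    (Δ : ℝ) (hΔ : Δ = (1 - δB) / (1 - δA)) :
    (1 - δA) * Δ ^ 2 / 6 + (1 - δB) * (3 - 2 * Δ) / 6 ≥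
      (1 - δA) * Δ ^ 3 / 6 + (1 - δB) * Δ * (3 - 2 * Δ ^ 2) / 6 :=
  stmt_7_general δA δB h1 h2 Δ hΔ
end

section
/- The function R(δ_A, δ_B) = (1-δ_A)·Δ²/6 + (1-δ_B)·(3-2Δ)/6, where Δ = (1-δ_B)/(1-δ_A), is monotone decreasing in δ_B on the region 0 ≤ δ_A ≤ δ_B < 1 (for fixed δ_A). -/
/-! With `a = 1 - δA` and `x = 1 - δB` the revenue simplifies to `x (3a - x) / (6a)`, a parabola
in `x` that increases up to its vertex `x = 3a/2`; the region `δA ≤ δB < 1` is `0 < x ≤ a`. -/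

lemma revenue_eq {a : ℝ} (ha : a ≠ 0) (x : ℝ) :
    a * (x / a) ^ 2 / 6 + x * (3 - 2 * (x / a)) / 6 = x * (3 * a - x) / (6 * a) := by
  field_simp
  ring

lemma mul_sub_le_mul_sub_of_add_le {x y c : ℝ} (hxy : x ≤ y) (hc : x + y ≤ c) :
    x * (c - x) ≤ y * (c - y) := by
  nlinarith [mul_nonneg (sub_nonneg.2 hxy) (sub_nonneg.2 hc)]

theorem stmt_10_general (δA : ℝ)
    (R : ℝ → ℝ)
    (hR : ∀ δB, R δB = (1 - δA) * ((1 - δB) / (1 - δA)) ^ 2 / 6 +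
      (1 - δB) * (3 - 2 * ((1 - δB) / (1 - δA))) / 6) :
    ∀ δB₁ δB₂, δA ≤ δB₁ → δB₁ ≤ δB₂ → δB₂ < 1 → R δB₂ ≤ R δB₁ := by
  intro δB₁ δB₂ h1 h2 h3
  have ha : 0 < 1 - δA := by linarith
  rw [hR, hR, revenue_eq ha.ne', revenue_eq ha.ne']
  gcongr ?_ / _
  exact mul_sub_le_mul_sub_of_add_le (by linarith) (by linarith)

theorem stmt_10 (δA : ℝ) (h0 : 0 ≤ δA)
    (R : ℝ → ℝ)
    (hR : ∀ δB, R δB = (1 - δA) * ((1 - δB) / (1 - δA)) ^ 2 / 6 +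
      (1 - δB) * (3 - 2 * ((1 - δB) / (1 - δA))) / 6) :
    ∀ δB₁ δB₂, δA ≤ δB₁ → δB₁ ≤ δB₂ → δB₂ < 1 → R δB₂ ≤ R δB₁ :=
  stmt_10_general δA R hR
end

section
/- Consider a two-slot instance with bidders A (discount curve (1,0)) and B (discount curve (1,1)), with values v_A = (1-ε)·v_B for 0 < ε < 1 and v_B > 0. Under greedy allocation with GSP pricing, the bid profile (b_A, b_B) = (0, v_B) is a pure Nash equilibrium in which B gets the first slot and A the second; its welfare is v_B while the optimal welfare is (2-ε)·v_B, so the welfare ratio is 2-ε. -/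
theorem stmt_11_general (ε vA vB : ℝ) (hε0 : 0 < ε) (hvB : 0 < vB)
    (hvA : vA = (1 - ε) * vB)
    (uA uB : ℝ → ℝ → ℝ)
    -- A's utility: wins slot 1 iff bA > bB, paying bB; otherwise slot 2 with discount 0
    (huA : ∀ bA bB, uA bA bB = if bA > bB then vA - bB else 0 * (vA - 0))
    -- B's utility: if A wins slot 1, B gets slot 2 (discount 1, price 0); else slot 1 at price bA
    (huB : ∀ bA bB, uB bA bB = if bA > bB then vB else vB - bA) :
    -- (0, vB) is a pure Nash equilibrium
    (∀ bA' ≥ (0:ℝ), uA bA' vB ≤ uA 0 vB) ∧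
    (∀ bB' ≥ (0:ℝ), uB 0 bB' ≤ uB 0 vB) ∧
    -- B gets the first slot and A the second: equilibrium welfare is vB
    ¬((0:ℝ) > vB) ∧
    -- optimal welfare is (2-ε)·vB and the welfare ratio is 2-ε
    vA + vB = (2 - ε) * vB ∧
    (vA + vB) / vB = 2 - ε := by
  -- Outbidding B would cost A the price vB, which exceeds A's value.
  have hvA_lt_vB : vA < vB := by rw [hvA]; nlinarith
  have hwelfare : vA + vB = (2 - ε) * vB := by rw [hvA]; ring
  refine ⟨fun bA' _ => ?_, fun bB' _ => ?_, hvB.not_gt, hwelfare, ?_⟩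
  · rw [huA, huA, if_neg hvB.not_gt]
    split_ifs <;> linarith
  · rw [huB, huB]
    split_ifs <;> linarith
  · rw [hwelfare, mul_div_cancel_right₀ _ hvB.ne']

/-- Two-slot instance: A has discount curve (1,0), B has discount curve (1,1).
Greedy allocation gives slot 1 to the strictly higher bidder (ties to B), GSP
charges the slot-1 winner the other bid and the slot-2 occupant nothing. -/
theorem stmt_11 (ε vA vB : ℝ) (hε0 : 0 < ε) (hε1 : ε < 1) (hvB : 0 < vB)
    (hvA : vA = (1 - ε) * vB)
    (uA uB : ℝ → ℝ → ℝ)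
    -- A's utility: wins slot 1 iff bA > bB, paying bB; otherwise slot 2 with discount 0
    (huA : ∀ bA bB, uA bA bB = if bA > bB then vA - bB else 0 * (vA - 0))
    -- B's utility: if A wins slot 1, B gets slot 2 (discount 1, price 0); else slot 1 at price bA
    (huB : ∀ bA bB, uB bA bB = if bA > bB then vB else vB - bA) :
    -- (0, vB) is a pure Nash equilibrium
    (∀ bA' ≥ (0:ℝ), uA bA' vB ≤ uA 0 vB) ∧
    (∀ bB' ≥ (0:ℝ), uB 0 bB' ≤ uB 0 vB) ∧
    -- B gets the first slot and A the second: equilibrium welfare is vB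
    ¬((0:ℝ) > vB) ∧
    -- optimal welfare is (2-ε)·vB and the welfare ratio is 2-ε
    vA + vB = (2 - ε) * vB ∧
    (vA + vB) / vB = 2 - ε :=
  stmt_11_general ε vA vB hε0 hvB hvA uA uB huA huB
end

section
/- For every ε ∈ (0, 1/2), the quantities EQ = 2 + ε + ε² − ε³ and OPT = 3 − 2ε − 2ε² satisfy OPT/EQ → 3/2 as ε → 0, and OPT > EQ for sufficiently small ε > 0. -/
/-!
Both welfares are polynomials in `ε` and the equilibrium welfare is `2 ≠ 0` at `ε = 0`, so their
ratio is continuous at `0`, where it equals `3 / 2`. The gap `OPT - EQ = 1 - 3ε - 3ε² + ε³` is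
positive as long as `3ε + 3ε² < 1`, e.g. for `ε < 1/4`.
-/

open Filter Topology

def eqWelfare (ε : ℝ) : ℝ := 2 + ε + ε ^ 2 - ε ^ 3

def optWelfare (ε : ℝ) : ℝ := 3 - 2 * ε - 2 * ε ^ 2

lemma continuous_eqWelfare : Continuous eqWelfare := by
  unfold eqWelfare; fun_prop

lemma continuous_optWelfare : Continuous optWelfare := by
  unfold optWelfare; fun_prop

lemma tendsto_optWelfare_div_eqWelfare :
    Tendsto (fun ε => optWelfare ε / eqWelfare ε) (𝓝 0) (𝓝 (3 / 2)) := by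
  have hEQ0 : eqWelfare 0 = 2 := by norm_num [eqWelfare]
  have hOPT0 : optWelfare 0 = 3 := by norm_num [optWelfare]
  have h : ContinuousAt (fun ε => optWelfare ε / eqWelfare ε) 0 :=
    continuous_optWelfare.continuousAt.div continuous_eqWelfare.continuousAt (by simp [hEQ0])
  simpa [hEQ0, hOPT0] using h.tendsto

lemma eqWelfare_lt_optWelfare {ε : ℝ} (h0 : 0 < ε) (h1 : ε < 1 / 4) :
    eqWelfare ε < optWelfare ε := by
  unfold eqWelfare optWelfare
  nlinarith [pow_pos h0 3]

theorem stmt_12 (EQ OPT : ℝ → ℝ)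
    (hEQ : ∀ ε, EQ ε = 2 + ε + ε ^ 2 - ε ^ 3)
    (hOPT : ∀ ε, OPT ε = 3 - 2 * ε - 2 * ε ^ 2) :
    Filter.Tendsto (fun ε => OPT ε / EQ ε) (nhdsWithin 0 (Set.Ioo (0:ℝ) (1/2)))
      (nhds (3 / 2)) ∧
    ∃ ε₀ > (0:ℝ), ∀ ε ∈ Set.Ioo (0:ℝ) ε₀, OPT ε > EQ ε := by
  obtain rfl : EQ = eqWelfare := funext hEQ
  obtain rfl : OPT = optWelfare := funext hOPT
  exact ⟨tendsto_optWelfare_div_eqWelfare.mono_left nhdsWithin_le_nhds,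
    1 / 4, by norm_num, fun ε hε => eqWelfare_lt_optWelfare hε.1 hε.2⟩
end

section
/- Let v_B = 1, δ_B = 1/2, and for δ_A ∈ [0, 1/2) set v_A(δ_A) = 1/(4(1-δ_A)²). Define f(δ_A) = (1/2 + v_A(δ_A)) / (1 + δ_A·v_A(δ_A)) = (2(1-δ_A)² + 1)/(δ_A + 4(1-δ_A)²). Then f is continuous on [0,1/2), f(0) = 3/4, and f(δ_A) → 1 as δ_A → 1/2; hence f attains values arbitrarily close to 3/4. -/
open Filter Set Topology

noncomputable def welfareRatio (δ : ℝ) : ℝ :=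
  (2 * (1 - δ) ^ 2 + 1) / (δ + 4 * (1 - δ) ^ 2)

-- The denominator is `4δ² - 7δ + 4`, whose discriminant `49 - 64` is negative.
lemma welfareRatio_denom_pos (δ : ℝ) : 0 < δ + 4 * (1 - δ) ^ 2 := by
  nlinarith [sq_nonneg (δ - 7 / 8)]

lemma continuous_welfareRatio : Continuous welfareRatio :=
  Continuous.div (by fun_prop) (by fun_prop) fun δ => (welfareRatio_denom_pos δ).ne'

lemma welfareRatio_zero : welfareRatio 0 = 3 / 4 := by
  norm_num [welfareRatio]

lemma welfareRatio_half : welfareRatio (1 / 2) = 1 := by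
  norm_num [welfareRatio]

theorem stmt_15_general (f : ℝ → ℝ)
    (hf' : ∀ δA ∈ Set.Ico (0:ℝ) (1/2),
      f δA = (2 * (1 - δA) ^ 2 + 1) / (δA + 4 * (1 - δA) ^ 2)) :
    ContinuousOn f (Set.Ico (0:ℝ) (1/2)) ∧
    f 0 = 3 / 4 ∧
    Filter.Tendsto f (nhdsWithin (1/2) (Set.Ico (0:ℝ) (1/2))) (nhds 1) ∧
    ∀ η > (0:ℝ), ∃ δA ∈ Set.Ico (0:ℝ) (1/2), |f δA - 3/4| < η := by
  have hEq : EqOn f welfareRatio (Ico 0 (1 / 2)) := hf'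
  have h0 : (0 : ℝ) ∈ Ico 0 (1 / 2) := by norm_num
  have hf0 : f 0 = 3 / 4 := (hEq h0).trans welfareRatio_zero
  refine ⟨continuous_welfareRatio.continuousOn.congr hEq, hf0, ?_, ?_⟩
  · have hlim : Tendsto welfareRatio (𝓝[Ico 0 (1 / 2)] (1 / 2)) (𝓝 1) := by
      have hcont := continuous_welfareRatio.continuousWithinAt (s := Ico 0 (1 / 2)) (x := 1 / 2)
      rwa [ContinuousWithinAt, welfareRatio_half] at hcont
    exact hlim.congr' (eventuallyEq_nhdsWithin_of_eqOn hEq).symm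
  · intro η hη
    exact ⟨0, h0, by simpa [hf0] using hη⟩

theorem stmt_15 (vA f : ℝ → ℝ)
    (hvA : ∀ δA, vA δA = 1 / (4 * (1 - δA) ^ 2))
    (hf : ∀ δA, f δA = (1/2 + vA δA) / (1 + δA * vA δA))
    (hf' : ∀ δA ∈ Set.Ico (0:ℝ) (1/2),
      f δA = (2 * (1 - δA) ^ 2 + 1) / (δA + 4 * (1 - δA) ^ 2)) :
    ContinuousOn f (Set.Ico (0:ℝ) (1/2)) ∧
    f 0 = 3 / 4 ∧
    Filter.Tendsto f (nhdsWithin (1/2) (Set.Ico (0:ℝ) (1/2))) (nhds 1) ∧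
    ∀ η > (0:ℝ), ∃ δA ∈ Set.Ico (0:ℝ) (1/2), |f δA - 3/4| < η :=
  stmt_15_general f hf'
end

section
/- If a game is (1/2, 1)-semismooth and social welfare is at least the sum of player utilities, then its Price of Anarchy is at most 4; if it is (1/2, μ)-semismooth, the Price of Anarchy is at most 2 + 2μ. -/
def IsPureNashEquilibrium {ι B : Type*} [DecidableEq ι] (u : ι → (ι → B) → ℝ) (b : ι → B) :
    Prop :=
  ∀ i (bi : B), u i (Function.update b i bi) ≤ u i b

theorem IsPureNashEquilibrium.sum_update_le {ι B : Type*} [Fintype ι] [DecidableEq ι]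
    {u : ι → (ι → B) → ℝ} {b : ι → B} (hb : IsPureNashEquilibrium u b) (b' : ι → B) :
    ∑ i, u i (Function.update b i (b' i)) ≤ ∑ i, u i b :=
  Finset.sum_le_sum fun i _ => hb i (b' i)

theorem IsPureNashEquilibrium.mul_opt_le_of_semismooth {ι B : Type*} [Fintype ι]
    [DecidableEq ι] {u : ι → (ι → B) → ℝ} {W : (ι → B) → ℝ} {OPT l μ : ℝ} {b' : ι → B}
    (hsmooth : ∀ b, l * OPT - μ * W b ≤ ∑ i, u i (Function.update b i (b' i)))
    (hW : ∀ b, ∑ i, u i b ≤ W b) {b : ι → B} (hb : IsPureNashEquilibrium u b) :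
    l * OPT ≤ (1 + μ) * W b := by
  have := (hsmooth b).trans ((hb.sum_update_le b').trans (hW b))
  linarith

open Finset in
theorem stmt_18_general {ι B : Type*} [Fintype ι] [DecidableEq ι]
    (u : ι → (ι → B) → ℝ) (W : (ι → B) → ℝ) (OPT : ℝ) (μ : ℝ)
    (b' : ι → B)
    -- (1/2, μ)-semismoothness
    (hsmooth : ∀ b : ι → B,
      ∑ i, u i (Function.update b i (b' i)) ≥ (1/2) * OPT - μ * W b)
    -- social welfare is at least the sum of player utilities
    (hW : ∀ b : ι → B, W b ≥ ∑ i, u i b) :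
    ∀ b : ι → B, (∀ i (bi : B), u i (Function.update b i bi) ≤ u i b) →
      (OPT ≤ (2 + 2 * μ) * W b ∧ (μ = 1 → OPT ≤ 4 * W b)) := by
  intro b hb
  have hPoA : 1 / 2 * OPT ≤ (1 + μ) * W b :=
    IsPureNashEquilibrium.mul_opt_le_of_semismooth hsmooth hW hb
  refine ⟨by linarith, ?_⟩
  rintro rfl
  linarith

open Finset in
/-- Abstract semismoothness ⇒ PoA bound. Players ι, bid space B, utilities u,
welfare W, optimal welfare OPT. A deterministic deviation b' witnesses
(λ,μ)-semismoothness. Any pure Nash equilibrium b has OPT ≤ ((μ+1)/λ)·W b. -/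
theorem stmt_18 {ι B : Type*} [Fintype ι] [DecidableEq ι]
    (u : ι → (ι → B) → ℝ) (W : (ι → B) → ℝ) (OPT : ℝ) (μ : ℝ) (hμ : 0 ≤ μ)
    (b' : ι → B)
    -- (1/2, μ)-semismoothness
    (hsmooth : ∀ b : ι → B,
      ∑ i, u i (Function.update b i (b' i)) ≥ (1/2) * OPT - μ * W b)
    -- social welfare is at least the sum of player utilities
    (hW : ∀ b : ι → B, W b ≥ ∑ i, u i b) :
    ∀ b : ι → B, (∀ i (bi : B), u i (Function.update b i bi) ≤ u i b) →
      (OPT ≤ (2 + 2 * μ) * W b ∧ (μ = 1 → OPT ≤ 4 * W b)) :=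
  stmt_18_general u W OPT μ b' hsmooth hW
end
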